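/- arXiv:0712.4388 — 3 statements merged into one kernel-verified Lean document; each statement's English description precedes it below -/
import Mathlib

section
/- Let g be a positive integer. In ℤ[c₁, c₂, t₁, t₂]/(c₁ - t₁ - t₂, c₂ - t₁t₂), the product ∏_{i=0}^{2g+2} (g·c₁ - (2g+2-i)·t₁ - i·t₂) equals -c₁ · ∏_{j=0}^{g} ( -(g-j)(g-j+2)c₁² + 4(g+1-j)²c₂ ). -/
open MvPolynomial Finset

/-!
Pair the factor of index `j` with that of index `2g+2-j`. Writing `c = t₁ + t₂` and
`m = g+1-j`, these two factors are `-c - m(t₁ - t₂)` and `-c + m(t₁ - t₂)`, whose product is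
`c² - m²(c² - 4t₁t₂) = -(m-1)(m+1)c² + 4m²t₁t₂`; the unpaired middle factor `j = g+1` is `-c`.
So the identity already holds in any commutative ring once `c₁, c₂` are replaced by
`t₁ + t₂, t₁t₂`, which is exactly what happens in the quotient.
-/

theorem Finset.prod_range_two_mul_add_one_eq_prod_pairs {M : Type*} [CommMonoid M] (n : ℕ)
    (f : ℕ → M) :
    ∏ i ∈ range (2 * n + 1), f i = (∏ j ∈ range n, f j * f (2 * n - j)) * f n := by
  have reflect : ∏ j ∈ range n, f (2 * n - j) = ∏ j ∈ range n, f (n + (j + 1)) := by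
    rw [← prod_range_reflect]
    refine prod_congr rfl fun j hj => congrArg f ?_
    have := mem_range.mp hj
    omega
  rw [prod_mul_distrib, reflect, show 2 * n + 1 = n + (n + 1) by ring, prod_range_add,
    prod_range_succ', add_zero, mul_assoc]

theorem prod_range_linear_forms_eq_neg_mul_prod_quadratic {R : Type*} [CommRing R] (g : ℕ)
    (t₁ t₂ : R) :
    ∏ i ∈ range (2 * g + 3), ((g : R) * (t₁ + t₂) - (2 * g + 2 - i) * t₁ - i * t₂) =
      -(t₁ + t₂) * ∏ j ∈ range (g + 1),
        (-(g - j) * (g - j + 2) * (t₁ + t₂) ^ 2 + 4 * (g + 1 - j) ^ 2 * (t₁ * t₂)) := by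
  rw [show 2 * g + 3 = 2 * (g + 1) + 1 by ring, prod_range_two_mul_add_one_eq_prod_pairs, mul_comm]
  congr 1
  · push_cast
    ring
  · refine prod_congr rfl fun j hj => ?_
    rw [Nat.cast_sub (by have := mem_range.mp hj; omega)]
    push_cast
    ring

theorem stmt_4_general (g : ℕ) :
    let c₁ : MvPolynomial (Fin 4) ℤ := X 0
    let c₂ : MvPolynomial (Fin 4) ℤ := X 1
    let t₁ : MvPolynomial (Fin 4) ℤ := X 2
    let t₂ : MvPolynomial (Fin 4) ℤ := X 3
    let I : Ideal (MvPolynomial (Fin 4) ℤ) :=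
      Ideal.span {c₁ - t₁ - t₂, c₂ - t₁ * t₂}
    Ideal.Quotient.mk I
        (∏ i ∈ Finset.range (2 * g + 3),
          (C (g : ℤ) * c₁ - C ((2 * g + 2 : ℤ) - (i : ℤ)) * t₁ - C (i : ℤ) * t₂)) =
      Ideal.Quotient.mk I
        (-c₁ * ∏ j ∈ Finset.range (g + 1),
          (C (-((g : ℤ) - (j : ℤ)) * ((g : ℤ) - (j : ℤ) + 2)) * c₁ ^ 2 +
            C (4 * ((g : ℤ) + 1 - (j : ℤ)) ^ 2) * c₂)) := by
  intro c₁ c₂ t₁ t₂ I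
  have hc₁ : Ideal.Quotient.mk I c₁ = Ideal.Quotient.mk I t₁ + Ideal.Quotient.mk I t₂ := by
    rw [← map_add, Ideal.Quotient.eq, ← sub_sub]
    exact Ideal.subset_span (Set.mem_insert _ _)
  have hc₂ : Ideal.Quotient.mk I c₂ = Ideal.Quotient.mk I t₁ * Ideal.Quotient.mk I t₂ := by
    rw [← map_mul, Ideal.Quotient.eq]
    exact Ideal.subset_span (Set.mem_insert_of_mem _ rfl)
  simp only [map_prod, map_mul, map_sub, map_neg, map_add, map_pow, eq_intCast, map_intCast,
    hc₁, hc₂]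
  push_cast
  exact prod_range_linear_forms_eq_neg_mul_prod_quadratic g (Ideal.Quotient.mk I t₁)
    (Ideal.Quotient.mk I t₂)

/-- in ℤ[c₁,c₂,t₁,t₂]/(c₁ - t₁ - t₂, c₂ - t₁t₂),
`X 0 = c₁`, `X 1 = c₂`, `X 2 = t₁`, `X 3 = t₂`. -/
theorem stmt_4 (g : ℕ) (hg : 0 < g) :
    let c₁ : MvPolynomial (Fin 4) ℤ := X 0
    let c₂ : MvPolynomial (Fin 4) ℤ := X 1
    let t₁ : MvPolynomial (Fin 4) ℤ := X 2
    let t₂ : MvPolynomial (Fin 4) ℤ := X 3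
    let I : Ideal (MvPolynomial (Fin 4) ℤ) :=
      Ideal.span {c₁ - t₁ - t₂, c₂ - t₁ * t₂}
    Ideal.Quotient.mk I
        (∏ i ∈ Finset.range (2 * g + 3),
          (C (g : ℤ) * c₁ - C ((2 * g + 2 : ℤ) - (i : ℤ)) * t₁ - C (i : ℤ) * t₂)) =
      Ideal.Quotient.mk I
        (-c₁ * ∏ j ∈ Finset.range (g + 1),
          (C (-((g : ℤ) - (j : ℤ)) * ((g : ℤ) - (j : ℤ) + 2)) * c₁ ^ 2 +
            C (4 * ((g : ℤ) + 1 - (j : ℤ)) ^ 2) * c₂)) :=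
  stmt_4_general g
end

section
/- For every integer g ≥ 1, the polynomial P(g·c₁) = ∏_{i=0}^{2g+2}(g·c₁ - (2g+2-i)t₁ - i·t₂), viewed as an element of ℤ[t₁,t₂], lies in the ideal of ℤ[t₁,t₂] generated by 2(2g+1)(t₁+t₂) and g(g-1)(t₁+t₂)² - 4g(g+1)t₁t₂. -/
open MvPolynomial

/-- Lemma 5.1 after restriction to the torus.
`X 0 = t₁`, `X 1 = t₂`, and `c₁ = t₁ + t₂`, `c₂ = t₁t₂`. -/
theorem stmt_5 (g : ℕ) (hg : 1 ≤ g) :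
    let t₁ : MvPolynomial (Fin 2) ℤ := X 0
    let t₂ : MvPolynomial (Fin 2) ℤ := X 1
    (∏ i ∈ Finset.range (2 * g + 3),
        (C (g : ℤ) * (t₁ + t₂) - C ((2 * g + 2 : ℤ) - (i : ℤ)) * t₁ - C (i : ℤ) * t₂)) ∈
      Ideal.span ({C ((2 : ℤ) * (2 * g + 1)) * (t₁ + t₂),
        C ((g : ℤ) * ((g : ℤ) - 1)) * (t₁ + t₂) ^ 2 -
          C (4 * (g : ℤ) * ((g : ℤ) + 1)) * (t₁ * t₂)} :
        Set (MvPolynomial (Fin 2) ℤ)) := by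
  intro t₁ t₂
  set G : ℕ → MvPolynomial (Fin 2) ℤ := fun i =>
    C (g : ℤ) * (t₁ + t₂) - C ((2 * g + 2 : ℤ) - (i : ℤ)) * t₁ - C (i : ℤ) * t₂ with hG
  show (∏ i ∈ Finset.range (2 * g + 3), G i) ∈ _
  have hS : ({0, g, g + 1, g + 2, 2 * g + 2} : Finset ℕ) ⊆ Finset.range (2 * g + 3) := by
    intro x hx
    simp only [Finset.mem_insert, Finset.mem_singleton] at hx
    simp only [Finset.mem_range]
    omega
  have hsplit : (∏ i ∈ Finset.range (2 * g + 3), G i) =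
      (∏ i ∈ Finset.range (2 * g + 3) \ {0, g, g + 1, g + 2, 2 * g + 2}, G i) *
        ∏ i ∈ ({0, g, g + 1, g + 2, 2 * g + 2} : Finset ℕ), G i :=
    (Finset.prod_sdiff hS).symm
  have hkey : (∏ i ∈ ({0, g, g + 1, g + 2, 2 * g + 2} : Finset ℕ), G i) ∈
      Ideal.span ({C ((2 : ℤ) * (2 * g + 1)) * (t₁ + t₂),
        C ((g : ℤ) * ((g : ℤ) - 1)) * (t₁ + t₂) ^ 2 -
          C (4 * (g : ℤ) * ((g : ℤ) + 1)) * (t₁ * t₂)} :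
        Set (MvPolynomial (Fin 2) ℤ)) := by
    have hprod : (∏ i ∈ ({0, g, g + 1, g + 2, 2 * g + 2} : Finset ℕ), G i) =
        G 0 * (G g * (G (g + 1) * (G (g + 2) * G (2 * g + 2)))) := by
      rw [Finset.prod_insert (by
            simp only [Finset.mem_insert, Finset.mem_singleton]; omega),
          Finset.prod_insert (by
            simp only [Finset.mem_insert, Finset.mem_singleton]; omega),
          Finset.prod_insert (by
            simp only [Finset.mem_insert, Finset.mem_singleton]; omega),
          Finset.prod_insert (by
            simp only [Finset.mem_singleton]; omega),
          Finset.prod_singleton]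
    rw [hprod, Ideal.mem_span_pair]
    refine ⟨2 * C (g : ℤ) * (t₁ + t₂) ^ 2 * (t₁ * t₂) - 8 * (C (g : ℤ) + 1) * (t₁ * t₂) ^ 2,
      -4 * (t₁ + t₂) * (t₁ * t₂), ?_⟩
    simp only [hG]
    push_cast
    simp only [map_sub, map_add, map_mul, map_one, map_zero, map_ofNat]
    ring
  rw [hsplit]
  exact Ideal.mul_mem_left _ _ hkey
end

section
/- For any even positive integer g, in the commutative ring R = ℤ[c₁,c₂]/(2(2g+1)c₁, g(g-1)c₁² - 4g(g+1)c₂), the element c₁ has additive order exactly 2(2g+1). -/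
open MvPolynomial

/-- in R = ℤ[c₁,c₂]/(2(2g+1)c₁, g(g-1)c₁² - 4g(g+1)c₂), g even positive,
the class c₁ has additive order exactly 2(2g+1). `X 0 = c₁`, `X 1 = c₂`. -/
theorem stmt_9 (g : ℕ) (hg : 0 < g) (hgeven : Even g) :
    let I : Ideal (MvPolynomial (Fin 2) ℤ) :=
      Ideal.span {C ((2 : ℤ) * (2 * g + 1)) * X 0,
        C ((g : ℤ) * ((g : ℤ) - 1)) * X 0 ^ 2 - C (4 * (g : ℤ) * ((g : ℤ) + 1)) * X 1}
    addOrderOf (Ideal.Quotient.mk I (X 0)) = 2 * (2 * g + 1) := by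
  intro I
  set n : ℕ := 2 * (2 * g + 1) with hn
  have hn0 : n ≠ 0 := by positivity
  haveI : NeZero n := ⟨hn0⟩
  have hnz : ((n : ℤ)) = 2 * (2 * (g : ℤ) + 1) := by push_cast [hn]; ring
  obtain ⟨k, hk⟩ := hgeven
  let f : MvPolynomial (Fin 2) ℤ →+* ZMod n :=
    (aeval ![(1 : ZMod n), ((-((g:ℤ)*((g:ℤ)-1)) : ℤ) : ZMod n)]).toRingHom
  have hf1 : ∀ a : ℤ, f (C a) = (a : ZMod n) := by
    intro a; simp [f]
  have hker : ∀ a ∈ I, f a = 0 := by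
    have hle : I ≤ RingHom.ker f := by
      rw [show I = _ from rfl, Ideal.span_le]
      rintro p hp
      simp only [Set.mem_insert_iff, Set.mem_singleton_iff] at hp
      rcases hp with rfl | rfl
      · have : f (C ((2 : ℤ) * (2 * g + 1)) * X 0) = (((2 : ℤ) * (2 * g + 1) : ℤ) : ZMod n) := by
          simp [f, Matrix.cons_val_zero]
        rw [SetLike.mem_coe, RingHom.mem_ker, this,
          ZMod.intCast_zmod_eq_zero_iff_dvd]
        exact ⟨1, by rw [hnz]; ring⟩
      · have : f (C ((g : ℤ) * ((g : ℤ) - 1)) * X 0 ^ 2 - C (4 * (g : ℤ) * ((g : ℤ) + 1)) * X 1)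
            = ((((g : ℤ) * ((g : ℤ) - 1)) - (4 * (g : ℤ) * ((g : ℤ) + 1)) * (-((g:ℤ)*((g:ℤ)-1))) : ℤ) : ZMod n) := by
          push_cast
          simp [f, Matrix.cons_val_zero, Matrix.cons_val_one]
        rw [SetLike.mem_coe, RingHom.mem_ker, this,
          ZMod.intCast_zmod_eq_zero_iff_dvd]
        refine ⟨(k : ℤ) * ((g : ℤ) - 1) * (2 * (g : ℤ) + 1), ?_⟩
        have hgk : (g : ℤ) = 2 * k := by exact_mod_cast congrArg Nat.cast (hk.trans (two_mul k).symm)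
        rw [hnz, hgk]; ring
    exact fun a ha => hle ha
  let φ := Ideal.Quotient.lift I f hker
  have hφ : φ (Ideal.Quotient.mk I (X 0)) = 1 := by
    simp [φ, f, Matrix.cons_val_zero]
  have hdvd1 : addOrderOf (Ideal.Quotient.mk I (X 0)) ∣ n := by
    apply addOrderOf_dvd_of_nsmul_eq_zero
    have hmem : (n : MvPolynomial (Fin 2) ℤ) * X 0 ∈ I := by
      have : (n : MvPolynomial (Fin 2) ℤ) * X 0 = C ((2 : ℤ) * (2 * g + 1)) * X 0 := by
        rw [← map_natCast (C : ℤ →+* MvPolynomial (Fin 2) ℤ) n, hnz]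
      rw [this]
      exact Ideal.subset_span (Set.mem_insert _ _)
    rw [nsmul_eq_mul]
    rw [show ((n : MvPolynomial (Fin 2) ℤ ⧸ I)) * Ideal.Quotient.mk I (X 0)
        = Ideal.Quotient.mk I ((n : MvPolynomial (Fin 2) ℤ) * X 0) by
          rw [map_mul, map_natCast]]
    exact (Ideal.Quotient.eq_zero_iff_mem).mpr hmem
  have hdvd2 : n ∣ addOrderOf (Ideal.Quotient.mk I (X 0)) := by
    have := addOrderOf_map_dvd φ.toAddMonoidHom (Ideal.Quotient.mk I (X 0))
    rw [RingHom.toAddMonoidHom_eq_coe] at this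
    simp only [AddMonoidHom.coe_coe] at this
    rw [hφ, ZMod.addOrderOf_one] at this
    exact this
  exact Nat.dvd_antisymm hdvd1 hdvd2
end
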